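/- For the symmetry map s on M = ℝ × V × ℝ defined by s_{(a,v,ℓ)}(a',v',ℓ') = (2a−a', 2cosh(a−a')v − v', 2cosh(2(a−a'))ℓ + Ω(v,v')sinh(a−a') − ℓ'), the symmetric space identity s_x ∘ s_y ∘ s_x = s_{s_x(y)} holds for all x, y ∈ M. -/
import Mathlib


/-- The geodesic symmetry on `M = ℝ × V × ℝ`. -/
noncomputable def sym {V : Type*} [AddCommGroup V] [Module ℝ V]
    (Ω : V →ₗ[ℝ] V →ₗ[ℝ] ℝ) (x y : ℝ × V × ℝ) : ℝ × V × ℝ :=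
  (2 * x.1 - y.1,
   (2 * Real.cosh (x.1 - y.1)) • x.2.1 - y.2.1,
   2 * Real.cosh (2 * (x.1 - y.1)) * x.2.2
     + Ω x.2.1 y.2.1 * Real.sinh (x.1 - y.1) - y.2.2)

set_option maxHeartbeats 2000000 in
/-- the symmetric space identity `s_x ∘ s_y ∘ s_x = s_{s_x(y)}`. -/
theorem sym_symmetric_space_identity {V : Type*} [AddCommGroup V] [Module ℝ V]
    (Ω : V →ₗ[ℝ] V →ₗ[ℝ] ℝ) (hΩ : ∀ v w : V, Ω v w = - Ω w v)
    (x y z : ℝ × V × ℝ) :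
    sym Ω x (sym Ω y (sym Ω x z)) = sym Ω (sym Ω x y) z := by
  obtain ⟨a, u, p⟩ := x
  obtain ⟨b, v, q⟩ := y
  obtain ⟨c, w, r⟩ := z
  have hvv : ∀ t : V, Ω t t = 0 := fun t => by have := hΩ t t; linarith
  have ha := Real.exp_ne_zero a
  have hb := Real.exp_ne_zero b
  have hc := Real.exp_ne_zero c
  simp only [sym, Prod.mk.injEq]
  refine ⟨by ring, ?_, ?_⟩
  · match_scalars <;>
    · try simp only [two_mul, Real.cosh_eq, Real.sinh_eq, Real.exp_sub, Real.exp_add,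
        Real.exp_neg]
      try field_simp
      try ring
  · simp only [map_sub, map_smul, LinearMap.sub_apply, LinearMap.smul_apply,
      smul_eq_mul, hvv, hΩ v u, hΩ w u, hΩ w v]
    simp only [two_mul, Real.cosh_eq, Real.sinh_eq, Real.exp_sub, Real.exp_add,
      Real.exp_neg]
    field_simp
    ring
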